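/- Let N ≥ 2 be an even integer. For every N-qubit density matrix ρ, each trace Tr(ρ σ_j^{⊗N}) (j = 1,2,3) is a real number, and the image of the map ρ ↦ (Re Tr(ρσ₁^{⊗N}), Re Tr(ρσ₂^{⊗N}), Re Tr(ρσ₃^{⊗N})), taken over all N-qubit density matrices ρ, is exactly the tetrahedron T_{(−1)^{N/2}}, i.e. the convex hull in ℝ³ of the four points (1,(−1)^{N/2},1), (−1,−(−1)^{N/2},1), (1,−(−1)^{N/2},−1), (−1,(−1)^{N/2},−1). -/

import Mathlib

/-!
Write `Xⱼ = σⱼ^{⊗N}`. The `Xⱼ` are Hermitian involutions, and for even `N` they commute, with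
`X₀X₁ = i^N X₂ = s X₂` where `s = (-1)^{N/2}`. The vertices `v` of `T_s` are the sign vectors with
`v₀v₁v₂ = s`, so `1 + Σ vⱼXⱼ = (1 + v₀X₀)(1 + v₁X₁)` is four times a product of commuting
projections; hence `ϖ(v) = 2^{-N}(1 + Σ vⱼXⱼ)` is a state with `Tr(ϖ(v)Xⱼ) = vⱼ`, and by convexity
of `c ↦ ϖ(c)` every point of `T_s` is attained. Conversely, for a state `ρ` the inequalities
`Tr(ρ ϖ(v)) ≥ 0` are exactly the four facet inequalities `1 + v · x ≥ 0` of `T_s`.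
-/

open Matrix BigOperators Polynomial
open scoped ComplexOrder

/-- The three Pauli matrices. -/
noncomputable def pauli : Fin 3 → Matrix (Fin 2) (Fin 2) ℂ :=
  ![!![0, 1; 1, 0], !![0, -Complex.I; Complex.I, 0], !![1, 0; 0, -1]]

/-- The `N`-fold Kronecker power of a 2×2 matrix, with rows and columns indexed by
`Fin N → Fin 2` (the `N`-qubit computational basis). -/
noncomputable def kronPow (A : Matrix (Fin 2) (Fin 2) ℂ) (N : ℕ) :
    Matrix (Fin N → Fin 2) (Fin N → Fin 2) ℂ :=
  Matrix.of fun i j => ∏ k, A (i k) (j k)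

/-- The `M³_N` state `ϖ(c) = 2^{-N} (I + c₁ σ₁^{⊗N} + c₂ σ₂^{⊗N} + c₃ σ₃^{⊗N})`. -/
noncomputable def Mstate (N : ℕ) (c : Fin 3 → ℝ) :
    Matrix (Fin N → Fin 2) (Fin N → Fin 2) ℂ :=
  ((2 : ℂ) ^ N)⁻¹ • (1 + ∑ j : Fin 3, (c j : ℂ) • kronPow (pauli j) N)


/-- The tetrahedron `T_s`: convex hull of `(1,s,1), (−1,−s,1), (1,−s,−1), (−1,s,−1)`. -/
noncomputable def tet (s : ℝ) : Set (Fin 3 → ℝ) :=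
  convexHull ℝ {![1, s, 1], ![-1, -s, 1], ![1, -s, -1], ![-1, s, -1]}

section KronPow

variable (N : ℕ)

lemma kronPow_mul (A B : Matrix (Fin 2) (Fin 2) ℂ) :
    kronPow A N * kronPow B N = kronPow (A * B) N := by
  ext i j
  simp only [kronPow, mul_apply, of_apply, Finset.prod_univ_sum, Fintype.piFinset_univ,
    Finset.prod_mul_distrib]

lemma kronPow_one : kronPow 1 N = 1 := by
  ext i j
  by_cases h : i = j
  · subst h; simp [kronPow]
  · obtain ⟨k, hk⟩ := Function.ne_iff.mp h
    simpa [kronPow, h] using Finset.prod_eq_zero (Finset.mem_univ k) (by simp [hk])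

lemma kronPow_smul (c : ℂ) (A : Matrix (Fin 2) (Fin 2) ℂ) :
    kronPow (c • A) N = c ^ N • kronPow A N := by
  ext i j
  simp [kronPow, Finset.prod_mul_distrib]

lemma trace_kronPow (A : Matrix (Fin 2) (Fin 2) ℂ) : (kronPow A N).trace = A.trace ^ N := by
  simp only [trace, diag, kronPow, of_apply, ← Fin.prod_const, Finset.prod_univ_sum,
    Fintype.piFinset_univ]

lemma conjTranspose_kronPow (A : Matrix (Fin 2) (Fin 2) ℂ) : (kronPow A N)ᴴ = kronPow Aᴴ N := by
  ext i j
  simp [kronPow]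

lemma Matrix.IsHermitian.kronPow {A : Matrix (Fin 2) (Fin 2) ℂ} (hA : A.IsHermitian) :
    (kronPow A N).IsHermitian := by
  rw [IsHermitian, conjTranspose_kronPow, hA.eq]

end KronPow

lemma pauli_mul_self (j : Fin 3) : pauli j * pauli j = 1 := by
  fin_cases j <;> ext a b <;> fin_cases a <;> fin_cases b <;> simp [pauli]

lemma isHermitian_pauli (j : Fin 3) : (pauli j).IsHermitian := by
  fin_cases j <;> ext a b <;> fin_cases a <;> fin_cases b <;> simp [pauli]

lemma trace_pauli (j : Fin 3) : (pauli j).trace = 0 := by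
  fin_cases j <;> simp [pauli, trace_fin_two]

lemma trace_pauli_mul_pauli (k j : Fin 3) :
    (pauli k * pauli j).trace = if k = j then 2 else 0 := by
  fin_cases k <;> fin_cases j <;> simp [pauli, trace_fin_two] <;> norm_num

lemma pauli_zero_mul_pauli_one : pauli 0 * pauli 1 = Complex.I • pauli 2 := by
  ext a b; fin_cases a <;> fin_cases b <;> simp [pauli]

lemma pauli_one_mul_pauli_zero : pauli 1 * pauli 0 = -Complex.I • pauli 2 := by
  ext a b; fin_cases a <;> fin_cases b <;> simp [pauli]

section PauliString

variable (N : ℕ)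

lemma kronPow_pauli_mul_self (j : Fin 3) : kronPow (pauli j) N * kronPow (pauli j) N = 1 := by
  rw [kronPow_mul, pauli_mul_self, kronPow_one]

lemma kronPow_pauli_zero_mul_one :
    kronPow (pauli 0) N * kronPow (pauli 1) N = Complex.I ^ N • kronPow (pauli 2) N := by
  rw [kronPow_mul, pauli_zero_mul_pauli_one, kronPow_smul]

lemma commute_kronPow_pauli_zero_one {N : ℕ} (hN : Even N) :
    Commute (kronPow (pauli 0) N) (kronPow (pauli 1) N) := by
  rw [Commute, SemiconjBy, kronPow_pauli_zero_mul_one, kronPow_mul, pauli_one_mul_pauli_zero,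
    kronPow_smul, hN.neg_pow]

lemma trace_kronPow_pauli {N : ℕ} (hN : N ≠ 0) (j : Fin 3) : (kronPow (pauli j) N).trace = 0 := by
  rw [trace_kronPow, trace_pauli, zero_pow hN]

lemma trace_kronPow_pauli_mul {N : ℕ} (hN : N ≠ 0) (k j : Fin 3) :
    (kronPow (pauli k) N * kronPow (pauli j) N).trace = if k = j then 2 ^ N else 0 := by
  rw [kronPow_mul, trace_kronPow, trace_pauli_mul_pauli, ite_pow, zero_pow hN]

lemma Complex.I_pow_of_even {N : ℕ} (hN : Even N) : Complex.I ^ N = ((-1 : ℝ) ^ (N / 2) : ℝ) := by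
  obtain ⟨m, rfl⟩ := hN
  rw [← two_mul, pow_mul, Complex.I_sq, Nat.mul_div_cancel_left m two_pos]
  push_cast; rfl

end PauliString

section Positivity

variable {n : Type*} [Fintype n]

lemma Matrix.IsHermitian.im_trace_mul {A B : Matrix n n ℂ} (hA : A.IsHermitian)
    (hB : B.IsHermitian) : (A * B).trace.im = 0 := by
  rw [← Complex.conj_eq_iff_im, ← Complex.star_def, ← trace_conjTranspose, conjTranspose_mul,
    hA.eq, hB.eq, trace_mul_comm]

open scoped MatrixOrder in
lemma Matrix.PosSemidef.trace_mul_nonneg {𝕜 : Type*} [RCLike 𝕜] {A B : Matrix n n 𝕜}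
    (hA : A.PosSemidef) (hB : B.PosSemidef) : 0 ≤ (A * B).trace := by
  classical
  obtain ⟨C, rfl⟩ := CStarAlgebra.nonneg_iff_eq_star_mul_self.mp hB.nonneg
  rw [← Matrix.mul_assoc, trace_mul_cycle]
  exact (hA.mul_mul_conjTranspose_same C).trace_nonneg

variable [DecidableEq n]

lemma isStarProjection_half_smul_one_add_smul {X : Matrix n n ℂ} (hX : X.IsHermitian)
    (hXX : X * X = 1) {a : ℝ} (ha : a ^ 2 = 1) :
    IsStarProjection ((1 / 2 : ℂ) • (1 + (a : ℂ) • X)) where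
  isIdempotentElem := by
    have ha' : (a : ℂ) * a = 1 := by exact_mod_cast (sq a).symm.trans ha
    simp only [IsIdempotentElem, smul_mul_smul_comm, add_mul, mul_add, one_mul, mul_one, hXX,
      ha', one_smul]
    match_scalars <;> ring
  isSelfAdjoint := by
    simp [IsSelfAdjoint, star_eq_conjTranspose, hX.eq]

open scoped MatrixOrder in
/-- `1 + aX + bY + ab s Z = (1 + aX)(1 + bY)` is four times the product of the commuting
projections `(1 + aX)/2` and `(1 + bY)/2`. -/
lemma posSemidef_one_add_smul_add_smul_add_smul {X Y Z : Matrix n n ℂ} (hX : X.IsHermitian)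
    (hY : Y.IsHermitian) (hXX : X * X = 1) (hYY : Y * Y = 1) (hXY : Commute X Y) {s : ℝ}
    (hZ : X * Y = (s : ℂ) • Z) {a b : ℝ} (ha : a ^ 2 = 1) (hb : b ^ 2 = 1) :
    (1 + (a : ℂ) • X + (b : ℂ) • Y + ((a * b * s : ℝ) : ℂ) • Z).PosSemidef := by
  have hcomm : Commute (1 + (a : ℂ) • X) (1 + (b : ℂ) • Y) :=
    (Commute.one_right _).add_right
      (((Commute.one_left Y).add_left (hXY.smul_left (a : ℂ))).smul_right (b : ℂ))
  have hproj := (isStarProjection_half_smul_one_add_smul hX hXX ha).mul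
    (isStarProjection_half_smul_one_add_smul hY hYY hb) ((hcomm.smul_left _).smul_right _)
  have hfactor : 1 + (a : ℂ) • X + (b : ℂ) • Y + ((a * b * s : ℝ) : ℂ) • Z =
      (4 : ℝ) • ((1 / 2 : ℂ) • (1 + (a : ℂ) • X) * (1 / 2 : ℂ) • (1 + (b : ℂ) • Y)) := by
    simp only [smul_mul_smul_comm, add_mul, mul_add, one_mul, mul_one, hZ, smul_smul]
    push_cast
    match_scalars <;> ring
  rw [hfactor]
  exact hproj.nonneg.posSemidef.smul (by norm_num)

end Positivity

section Mstate

variable {N : ℕ}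

lemma trace_mul_Mstate (ρ : Matrix (Fin N → Fin 2) (Fin N → Fin 2) ℂ) (c : Fin 3 → ℝ) :
    (ρ * Mstate N c).trace =
      (((2 : ℝ) ^ N)⁻¹ : ℝ) * (ρ.trace + ∑ j, (c j : ℂ) * (ρ * kronPow (pauli j) N).trace) := by
  simp [Mstate, Matrix.mul_sum, trace_sum, mul_add]

lemma trace_Mstate (hN : N ≠ 0) (c : Fin 3 → ℝ) : (Mstate N c).trace = 1 := by
  simpa [trace_kronPow_pauli hN, Fintype.card_fun] using trace_mul_Mstate (N := N) 1 c

lemma trace_Mstate_mul_kronPow_pauli (hN : N ≠ 0) (c : Fin 3 → ℝ) (j : Fin 3) :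
    (Mstate N c * kronPow (pauli j) N).trace = c j := by
  simp [Mstate, Matrix.add_mul, Matrix.sum_mul, trace_sum, trace_kronPow_pauli hN,
    trace_kronPow_pauli_mul hN, mul_left_comm]

lemma Mstate_smul_add_smul (c d : Fin 3 → ℝ) {a b : ℝ} (hab : a + b = 1) :
    Mstate N (a • c + b • d) = a • Mstate N c + b • Mstate N d := by
  have hb : b = 1 - a := by linarith
  subst hb
  simp only [Mstate, Fin.sum_univ_three, Pi.add_apply, Pi.smul_apply, smul_eq_mul]
  push_cast
  match_scalars <;> simp only [Complex.coe_algebraMap] <;> ring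

lemma convex_setOf_posSemidef_Mstate : Convex ℝ {c : Fin 3 → ℝ | (Mstate N c).PosSemidef} := by
  intro c hc d hd a b ha hb hab
  rw [Set.mem_ofPred_eq, Mstate_smul_add_smul c d hab]
  exact (hc.smul ha).add (hd.smul hb)

end Mstate

section Tetrahedron

lemma sq_neg_one_pow (k : ℕ) : ((-1 : ℝ) ^ k) ^ 2 = 1 := by
  rw [← pow_mul, mul_comm, pow_mul, neg_one_sq, one_pow]

def tetVertex (s : ℝ) : Fin 4 → Fin 3 → ℝ :=
  ![![1, s, 1], ![-1, -s, 1], ![1, -s, -1], ![-1, s, -1]]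

variable {s : ℝ}

lemma tetVertex_sq (hs : s ^ 2 = 1) (i : Fin 4) (j : Fin 3) : tetVertex s i j ^ 2 = 1 := by
  fin_cases i <;> fin_cases j <;> simp [tetVertex, hs]

lemma tetVertex_two (hs : s ^ 2 = 1) (i : Fin 4) :
    tetVertex s i 2 = tetVertex s i 0 * tetVertex s i 1 * s := by
  fin_cases i <;> simp [tetVertex, ← sq, hs]

lemma tet_eq_convexHull_range (s : ℝ) : tet s = convexHull ℝ (Set.range (tetVertex s)) := by
  simp only [tet, tetVertex, Matrix.range_cons, Matrix.range_empty, Set.union_empty,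
    Set.singleton_union]

lemma tet_eq_setOf (hs : s ^ 2 = 1) :
    tet s = {x | ∀ i, 0 ≤ 1 + tetVertex s i ⬝ᵥ x} := by
  rw [tet_eq_convexHull_range]
  apply Set.Subset.antisymm
  · refine convexHull_min (Set.range_subset_iff.2 fun k i => ?_) ?_
    · fin_cases i <;> fin_cases k <;> simp [tetVertex, dotProduct, Fin.sum_univ_three] <;>
        nlinarith [hs]
    · intro x hx y hy a b ha hb hab i
      have := add_nonneg (mul_nonneg ha (hx i)) (mul_nonneg hb (hy i))
      simp only [dotProduct_add, dotProduct_smul, smul_eq_mul]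
      linear_combination this + hab
  · intro x hx
    have hx_eq : x = ∑ i, ((1 + tetVertex s i ⬝ᵥ x) / 4) • tetVertex s i := by
      ext j
      fin_cases j <;> simp [tetVertex, Fin.sum_univ_four, dotProduct, Fin.sum_univ_three]
      · ring
      · linear_combination -x 1 * hs
      · ring
    rw [hx_eq]
    refine (convex_convexHull ℝ _).sum_mem (fun i _ => by linarith [hx i]) ?_
      (fun i _ => subset_convexHull ℝ _ (Set.mem_range_self i))
    simp [tetVertex, Fin.sum_univ_four, dotProduct, Fin.sum_univ_three]
    ring

end Tetrahedron

section States

variable {N : ℕ}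

lemma posSemidef_Mstate_tetVertex (hN : Even N) (i : Fin 4) :
    (Mstate N (tetVertex ((-1) ^ (N / 2)) i)).PosSemidef := by
  have hs := sq_neg_one_pow (N / 2)
  have hZ := kronPow_pauli_zero_mul_one N
  rw [Complex.I_pow_of_even hN] at hZ
  have h := posSemidef_one_add_smul_add_smul_add_smul ((isHermitian_pauli 0).kronPow N)
    ((isHermitian_pauli 1).kronPow N) (kronPow_pauli_mul_self N 0) (kronPow_pauli_mul_self N 1)
    (commute_kronPow_pauli_zero_one hN) hZ (tetVertex_sq hs i 0) (tetVertex_sq hs i 1)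
  rw [← tetVertex_two hs] at h
  have hscalar : ((2 : ℂ) ^ N)⁻¹ = (((2 : ℝ) ^ N)⁻¹ : ℝ) := by push_cast; rfl
  rw [Mstate, Fin.sum_univ_three, ← add_assoc, ← add_assoc, hscalar, Complex.coe_smul]
  exact h.smul (by positivity)

lemma one_add_dotProduct_re_trace_nonneg {ρ : Matrix (Fin N → Fin 2) (Fin N → Fin 2) ℂ}
    (hρ : ρ.PosSemidef) (hρ1 : ρ.trace = 1) {c : Fin 3 → ℝ} (hc : (Mstate N c).PosSemidef) :
    0 ≤ 1 + c ⬝ᵥ fun j => (ρ * kronPow (pauli j) N).trace.re := by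
  have h := Complex.nonneg_iff.mp (hρ.trace_mul_nonneg hc) |>.1
  rw [trace_mul_Mstate, hρ1, Complex.re_ofReal_mul, Complex.add_re, Complex.one_re,
    Complex.re_sum] at h
  simp only [Complex.re_ofReal_mul] at h
  exact nonneg_of_mul_nonneg_right h (by positivity)

end States

theorem stmt6 (N : ℕ) (hN : Even N) (hN2 : 2 ≤ N) :
    (∀ ρ : Matrix (Fin N → Fin 2) (Fin N → Fin 2) ℂ, ρ.PosSemidef → ρ.trace = 1 →
      ∀ j : Fin 3, ((ρ * kronPow (pauli j) N).trace).im = 0) ∧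
    {x : Fin 3 → ℝ | ∃ ρ : Matrix (Fin N → Fin 2) (Fin N → Fin 2) ℂ,
        ρ.PosSemidef ∧ ρ.trace = 1 ∧ ∀ j, x j = ((ρ * kronPow (pauli j) N).trace).re}
      = tet ((-1 : ℝ)^(N/2)) := by
  have hN0 : N ≠ 0 := by omega
  have hs := sq_neg_one_pow (N / 2)
  refine ⟨fun ρ hρ _ j => hρ.isHermitian.im_trace_mul ((isHermitian_pauli j).kronPow N), ?_⟩
  apply Set.Subset.antisymm
  · rintro x ⟨ρ, hρ, hρ1, hx⟩
    obtain rfl : x = fun j => (ρ * kronPow (pauli j) N).trace.re := _root_.funext hx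
    rw [tet_eq_setOf hs]
    exact fun i => one_add_dotProduct_re_trace_nonneg hρ hρ1 (posSemidef_Mstate_tetVertex hN i)
  · intro x hx
    rw [tet_eq_convexHull_range] at hx
    refine ⟨Mstate N x, convexHull_min (Set.range_subset_iff.2 (posSemidef_Mstate_tetVertex hN))
      convex_setOf_posSemidef_Mstate hx, trace_Mstate hN0 x, fun j => ?_⟩
    rw [trace_Mstate_mul_kronPow_pauli hN0, Complex.ofReal_re]
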